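/- Let G = G₀ *_H G₁ be a nondegenerate free product with amalgamation. For every k ≥ 0: K₀ ⊆ gC_kg⁻¹ for every g ∈ T_{0,k+1}, and K₁ ⊆ gC_kg⁻¹ for every g ∈ T_{1,k+1}. Consequently, if C_k = {e} for some k ≥ 0, then K₀ = K₁ = {e}. -/

import Mathlib

/-!
Let `x ∈ K_j` and `g ∈ T_{j,k+1}`. Multiplying an element with a reduced form of positive length
starting in `G_j` by a single letter of `G₀ ∪ G₁` shortens that form by at most one letter, and any
`t ∈ T_{j',n}` is a product of at most `n + 1` letters. So for `n ≤ k` the product `g t` still lies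
in some `T_{j,m}`, hence `(g t)⁻¹ x (g t) ∈ H`, which says `g⁻¹ x g ∈ C_k`. Nondegeneracy makes
`T_{j,k+1}` nonempty, so `C_k = {e}` forces `K_j = {e}`.
-/

variable {G : Type*} [Group G]

/-- `AltWord G₀ G₁ H j w`: the list `w` is an alternating word whose `i`-th letter lies in
`G_{(i+j) mod 2} \ H`. -/
def AltWord (G₀ G₁ H : Subgroup G) (j : ℕ) (w : List G) : Prop :=
  ∀ (i : ℕ) (hi : i < w.length),
    w.get ⟨i, hi⟩ ∈ (if (i + j) % 2 = 0 then (G₀ : Set G) else (G₁ : Set G)) \ (H : Set G)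

/-- `G` is the free product of its subgroups `G₀` and `G₁` amalgamated over their common
subgroup `H` (internal characterization: `G₀ ∩ G₁ = H`, the subgroups `G₀` and `G₁` generate
`G`, and no nonempty alternating word with letters in `G₀ \ H` and `G₁ \ H` has product
in `H`). -/
structure IsAmalgam (G₀ G₁ H : Subgroup G) : Prop where
  le_left : H ≤ G₀
  le_right : H ≤ G₁
  inf_eq : G₀ ⊓ G₁ = H
  closure_eq_top : Subgroup.closure ((G₀ : Set G) ∪ (G₁ : Set G)) = ⊤
  reduced : ∀ (j : ℕ) (w : List G), w ≠ [] → AltWord G₀ G₁ H j w → w.prod ∉ H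

/-- The amalgam `G₀ *_H G₁` is *nondegenerate*: `([G₀ : H] − 1) · ([G₁ : H] − 1) ≥ 2`,
i.e. `H` is a proper subgroup of both `G₀` and `G₁`, and has index at least `3` (possibly
infinite) in at least one of them. -/
def Nondegenerate (G₀ G₁ H : Subgroup G) : Prop :=
  H.relIndex G₀ ≠ 1 ∧ H.relIndex G₁ ≠ 1 ∧ ¬(H.relIndex G₀ = 2 ∧ H.relIndex G₁ = 2)

/-- `T_{j,k}`: the set of elements of `G` that are products of alternating words of length
`k` whose first letter lies in `G_j \ H`; by convention `T_{j,0} = H`. -/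
def TT (G₀ G₁ H : Subgroup G) (j k : ℕ) : Set G :=
  if k = 0 then (H : Set G)
  else {g | ∃ w : List G, w.length = k ∧ AltWord G₀ G₁ H j w ∧ w.prod = g}

/-- `C_{j,k} = ⋂_{g ∈ T_{j,k}} g H g⁻¹`. -/
def CC (G₀ G₁ H : Subgroup G) (j k : ℕ) : Set G :=
  ⋂ g ∈ TT G₀ G₁ H j k, {x | g⁻¹ * x * g ∈ H}

/-- `K_j = ⋂_{k ≥ 0} C_{j,k}`. -/
def KK (G₀ G₁ H : Subgroup G) (j : ℕ) : Set G :=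
  ⋂ k : ℕ, CC G₀ G₁ H j k

/-- The kernel of the amalgam, `ker G = ⋂_{g ∈ G} g H g⁻¹`, as a set. -/
def amalgamKerSet (H : Subgroup G) : Set G :=
  ⋂ g : G, {x | g⁻¹ * x * g ∈ H}

/-- `C_k = ⋂_{0 ≤ n ≤ k, j ∈ {0,1}} C_{j,n}`. -/
def CFin (G₀ G₁ H : Subgroup G) (k : ℕ) : Set G :=
  ⋂ n ∈ Set.Iic k, CC G₀ G₁ H 0 n ∩ CC G₀ G₁ H 1 n

def altFactor (G₀ G₁ : Subgroup G) (n : ℕ) : Subgroup G :=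
  if n % 2 = 0 then G₀ else G₁

section

variable {G₀ G₁ H : Subgroup G} {j : ℕ}

lemma le_altFactor (hH₀ : H ≤ G₀) (hH₁ : H ≤ G₁) (n : ℕ) : H ≤ altFactor G₀ G₁ n := by
  unfold altFactor; split_ifs <;> assumption

lemma altFactor_subset_union (n : ℕ) : (altFactor G₀ G₁ n : Set G) ⊆ (G₀ : Set G) ∪ G₁ := by
  unfold altFactor; split_ifs
  exacts [Set.subset_union_left, Set.subset_union_right]

lemma mem_altFactor_succ_of_notMem {a : G} {n : ℕ} (ha : a ∈ (G₀ : Set G) ∪ G₁)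
    (hn : a ∉ altFactor G₀ G₁ n) : a ∈ altFactor G₀ G₁ (n + 1) := by
  unfold altFactor at *
  rcases ha with ha | ha <;> split_ifs at hn ⊢ <;> first | omega | contradiction

lemma exists_mem_altFactor_notMem (hG₀ : ¬G₀ ≤ H) (hG₁ : ¬G₁ ≤ H) (n : ℕ) :
    ∃ c ∈ altFactor G₀ G₁ n, c ∉ H := by
  unfold altFactor; split_ifs
  exacts [SetLike.not_le_iff_exists.mp hG₀, SetLike.not_le_iff_exists.mp hG₁]

lemma altWord_iff {w : List G} :
    AltWord G₀ G₁ H j w ↔ ∀ (i : ℕ) (hi : i < w.length),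
      w[i] ∈ altFactor G₀ G₁ (i + j) ∧ w[i] ∉ H := by
  refine forall_congr' fun i => forall_congr' fun hi => ?_
  unfold altFactor; split_ifs <;> rfl

lemma altWord_nil : AltWord G₀ G₁ H j [] := fun _ hi => absurd hi (Nat.not_lt_zero _)

lemma altWord_append_singleton_iff {u : List G} {x : G} :
    AltWord G₀ G₁ H j (u ++ [x]) ↔
      AltWord G₀ G₁ H j u ∧ x ∈ altFactor G₀ G₁ (u.length + j) ∧ x ∉ H := by
  simp only [altWord_iff, List.length_append, List.length_singleton, List.getElem_append]
  constructor
  · intro h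
    refine ⟨fun i hi => by simpa [hi] using h i (by omega), by simpa using h u.length (by omega)⟩
  · rintro ⟨hu, hx⟩ i hi
    by_cases hiu : i < u.length
    · simpa [hiu] using hu i hiu
    · obtain rfl : i = u.length := by omega
      simpa using hx

lemma AltWord.mem_union {w : List G} (hw : AltWord G₀ G₁ H j w) :
    ∀ a ∈ w, a ∈ (G₀ : Set G) ∪ G₁ :=
  List.forall_mem_iff_getElem.mpr fun i hi => altFactor_subset_union _ (altWord_iff.mp hw i hi).1

lemma prod_mem_TT {w : List G} (hw : AltWord G₀ G₁ H j w) : w.prod ∈ TT G₀ G₁ H j w.length := by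
  rcases w with _ | ⟨a, w⟩
  · exact H.one_mem
  · exact ⟨_, rfl, hw, rfl⟩

lemma mem_TT_succ_iff {m : ℕ} {g : G} :
    g ∈ TT G₀ G₁ H j (m + 1) ↔ ∃ u x, u.length = m ∧ AltWord G₀ G₁ H j u ∧
      x ∈ altFactor G₀ G₁ (m + j) ∧ x ∉ H ∧ u.prod * x = g := by
  constructor
  · rintro ⟨w, hlen, hw, rfl⟩
    obtain rfl | ⟨u, x, rfl⟩ := w.eq_nil_or_concat'
    · simp at hlen
    · obtain ⟨hu, hx⟩ := altWord_append_singleton_iff.mp hw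
      simp only [List.length_append, List.length_singleton, add_left_inj] at hlen
      exact ⟨u, x, hlen, hu, hlen ▸ hx.1, hx.2, by simp⟩
  · rintro ⟨u, x, rfl, hu, hx, hxH, rfl⟩
    simpa using prod_mem_TT (altWord_append_singleton_iff.mpr ⟨hu, hx, hxH⟩)

lemma mul_mem_TT_of_mem (hH₀ : H ≤ G₀) (hH₁ : H ≤ G₁) {m : ℕ} {g h : G}
    (hg : g ∈ TT G₀ G₁ H j m) (hh : h ∈ H) : g * h ∈ TT G₀ G₁ H j m := by
  rcases m with _ | m
  · exact H.mul_mem hg hh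
  obtain ⟨u, x, rfl, hu, hx, hxH, rfl⟩ := mem_TT_succ_iff.mp hg
  refine mem_TT_succ_iff.mpr ⟨u, x * h, rfl, hu, mul_mem hx (le_altFactor hH₀ hH₁ _ hh),
    fun hxh => hxH ?_, (mul_assoc _ _ _).symm⟩
  simpa using H.mul_mem hxh (H.inv_mem hh)

/-- The letter `a` either starts a new syllable, merges with the last letter `x`, or cancels it
into `H`, in which case the previous letter absorbs `x * a`. -/
lemma exists_mul_mem_TT_of_mem_union (hH₀ : H ≤ G₀) (hH₁ : H ≤ G₁) {m : ℕ} {g a : G}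
    (hg : g ∈ TT G₀ G₁ H j (m + 1)) (ha : a ∈ (G₀ : Set G) ∪ G₁) :
    ∃ m', m ≤ m' ∧ g * a ∈ TT G₀ G₁ H j m' := by
  obtain ⟨u, x, rfl, hu, hx, hxH, rfl⟩ := mem_TT_succ_iff.mp hg
  by_cases haF : a ∈ altFactor G₀ G₁ (u.length + j)
  · rw [mul_assoc]
    by_cases hxa : x * a ∈ H
    · exact ⟨_, le_rfl, mul_mem_TT_of_mem hH₀ hH₁ (prod_mem_TT hu) hxa⟩
    · exact ⟨_, Nat.le_succ _, mem_TT_succ_iff.mpr ⟨u, _, rfl, hu, mul_mem hx haF, hxa, rfl⟩⟩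
  · have haH : a ∉ H := fun h => haF (le_altFactor hH₀ hH₁ _ h)
    have hux : AltWord G₀ G₁ H j (u ++ [x]) := altWord_append_singleton_iff.mpr ⟨hu, hx, hxH⟩
    refine ⟨u.length + 2, by omega, mem_TT_succ_iff.mpr ⟨u ++ [x], a, by simp, hux, ?_, haH, ?_⟩⟩
    · simpa [add_right_comm] using mem_altFactor_succ_of_notMem ha haF
    · simp

lemma exists_mul_prod_mem_TT (hH₀ : H ≤ G₀) (hH₁ : H ≤ G₁) (v : List G)
    (hv : ∀ a ∈ v, a ∈ (G₀ : Set G) ∪ G₁) {m : ℕ} {g : G}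
    (hg : g ∈ TT G₀ G₁ H j (m + v.length)) : ∃ m', g * v.prod ∈ TT G₀ G₁ H j m' := by
  induction v generalizing g m with
  | nil => exact ⟨m, by simpa using hg⟩
  | cons a v ih =>
    obtain ⟨m', hm', hga⟩ := exists_mul_mem_TT_of_mem_union hH₀ hH₁
      (m := m + v.length) (by simpa [← add_assoc] using hg) (hv a List.mem_cons_self)
    obtain ⟨m'', hm''⟩ := ih (fun b hb => hv b (List.mem_cons_of_mem a hb))
      (m := m' - v.length) (by rwa [Nat.sub_add_cancel (by omega)])
    exact ⟨m'', by simpa [mul_assoc] using hm''⟩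

lemma exists_prod_eq_of_mem_TT (hH₀ : H ≤ G₀) {j' n : ℕ} {t : G} (ht : t ∈ TT G₀ G₁ H j' n) :
    ∃ v : List G, v.length ≤ n + 1 ∧ (∀ a ∈ v, a ∈ (G₀ : Set G) ∪ G₁) ∧ v.prod = t := by
  rcases n with _ | n
  · exact ⟨[t], by simp, by simpa using Or.inl (hH₀ ht), by simp⟩
  · obtain ⟨v, hlen, hv, rfl⟩ := ht
    exact ⟨v, by omega, hv.mem_union, rfl⟩

lemma exists_mul_mem_TT (hH₀ : H ≤ G₀) (hH₁ : H ≤ G₁) {j' k n : ℕ} {g t : G}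
    (hg : g ∈ TT G₀ G₁ H j (k + 1)) (ht : t ∈ TT G₀ G₁ H j' n) (hn : n ≤ k) :
    ∃ m, g * t ∈ TT G₀ G₁ H j m := by
  obtain ⟨v, hlen, hv, rfl⟩ := exists_prod_eq_of_mem_TT hH₀ ht
  exact exists_mul_prod_mem_TT hH₀ hH₁ v hv (m := k + 1 - v.length)
    (by rwa [Nat.sub_add_cancel (by omega)])

lemma TT_nonempty (hG₀ : ¬G₀ ≤ H) (hG₁ : ¬G₁ ≤ H) (k : ℕ) : (TT G₀ G₁ H j k).Nonempty := by
  suffices ∃ w : List G, w.length = k ∧ AltWord G₀ G₁ H j w by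
    obtain ⟨w, rfl, hw⟩ := this
    exact ⟨_, prod_mem_TT hw⟩
  induction k with
  | zero => exact ⟨[], rfl, altWord_nil⟩
  | succ k ih =>
    obtain ⟨w, rfl, hw⟩ := ih
    obtain ⟨c, hc, hcH⟩ := exists_mem_altFactor_notMem hG₀ hG₁ (w.length + j)
    exact ⟨w ++ [c], by simp, altWord_append_singleton_iff.mpr ⟨hw, hc, hcH⟩⟩

lemma one_mem_KK : (1 : G) ∈ KK G₀ G₁ H j := by
  simp only [KK, CC, Set.mem_iInter]
  intro _ g _
  simp

lemma KK_subset_conj_CFin_of_mem_TT (hH₀ : H ≤ G₀) (hH₁ : H ≤ G₁)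
    {k : ℕ} {g : G} (hg : g ∈ TT G₀ G₁ H j (k + 1)) :
    KK G₀ G₁ H j ⊆ {x | g⁻¹ * x * g ∈ CFin G₀ G₁ H k} := by
  intro x hx
  have hconj : ∀ j' n t, n ≤ k → t ∈ TT G₀ G₁ H j' n → t⁻¹ * (g⁻¹ * x * g) * t ∈ H := by
    intro j' n t hn ht
    obtain ⟨m, hm⟩ := exists_mul_mem_TT hH₀ hH₁ hg ht hn
    have hgt : (g * t)⁻¹ * x * (g * t) ∈ H := Set.mem_iInter₂.mp (Set.mem_iInter.mp hx m) _ hm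
    simpa [mul_assoc] using hgt
  simp only [Set.mem_ofPred_eq, CFin, CC, Set.mem_iInter, Set.mem_inter_iff]
  exact fun n hn => ⟨fun t ht => hconj 0 n t hn ht, fun t ht => hconj 1 n t hn ht⟩

lemma Nondegenerate.not_left_le (hnd : Nondegenerate G₀ G₁ H) : ¬G₀ ≤ H :=
  fun h => hnd.1 (Subgroup.relIndex_eq_one.mpr h)

lemma Nondegenerate.not_right_le (hnd : Nondegenerate G₀ G₁ H) : ¬G₁ ≤ H :=
  fun h => hnd.2.1 (Subgroup.relIndex_eq_one.mpr h)

end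

/-- Let `G = G₀ *_H G₁` be a nondegenerate free product with amalgamation. For every
`k ≥ 0`: `K₀ ⊆ g C_k g⁻¹` for every `g ∈ T_{0,k+1}`, and `K₁ ⊆ g C_k g⁻¹` for every
`g ∈ T_{1,k+1}`. Consequently, if `C_k = {e}` for some `k ≥ 0`, then `K₀ = K₁ = {e}`. -/
theorem K_subset_conj_CFin {G : Type*} [Group G] (G₀ G₁ H : Subgroup G)
    (ha : IsAmalgam G₀ G₁ H) (hnd : Nondegenerate G₀ G₁ H) :
    (∀ k : ℕ, ∀ g ∈ TT G₀ G₁ H 0 (k + 1),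
      KK G₀ G₁ H 0 ⊆ {x | g⁻¹ * x * g ∈ CFin G₀ G₁ H k}) ∧
    (∀ k : ℕ, ∀ g ∈ TT G₀ G₁ H 1 (k + 1),
      KK G₀ G₁ H 1 ⊆ {x | g⁻¹ * x * g ∈ CFin G₀ G₁ H k}) ∧
    ((∃ k : ℕ, CFin G₀ G₁ H k = {1}) →
      KK G₀ G₁ H 0 = {1} ∧ KK G₀ G₁ H 1 = {1}) := by
  have hsub := fun j k g (hg : g ∈ TT G₀ G₁ H j (k + 1)) =>
    KK_subset_conj_CFin_of_mem_TT ha.le_left ha.le_right hg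
  refine ⟨fun k g => hsub 0 k g, fun k g => hsub 1 k g, fun ⟨k, hCk⟩ => ?_⟩
  have hKK : ∀ j, KK G₀ G₁ H j = {1} := by
    intro j
    obtain ⟨g, hg⟩ := TT_nonempty (j := j) hnd.not_left_le hnd.not_right_le (k + 1)
    refine Set.eq_singleton_iff_unique_mem.mpr ⟨one_mem_KK, fun x hx => ?_⟩
    have hconj : g⁻¹ * x * g⁻¹⁻¹ = 1 := by simpa [hCk] using hsub j k g hg hx
    exact conj_eq_one_iff.mp hconj
  exact ⟨hKK 0, hKK 1⟩
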